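/- For every f ∈ 𝒞, every k ∈ ℕ, every integer j ≥ 1 and every L ≥ 1: the constant c_k := Σ_{l=1}^{∞} f(l) l^k is finite, the operator f(M) X_L^j M^k (a priori defined on D) extends to a bounded operator on H, and ‖f(M) X_L^j M^k‖ ≤ c_k ((2^k + 1)(L+1)^{3/2})^j; here X_L := a Q_L + a† Q_{L−1}, M := N + 1, and f(M) is the diagonal operator f(M) e_n = f(n+1) e_n. -/

import Mathlib

open Filter Topology
open scoped ENNReal

noncomputable section

/-- The boson Hilbert space `H = ℓ²(ℕ, ℂ)`. -/
abbrev Hb : Type := lp (fun _ : ℕ => ℂ) 2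

/-- The standard orthonormal basis vectors `e n` of `H`. -/
def eb (n : ℕ) : Hb := lp.single 2 n (1 : ℂ)

/-- The dense subspace `D` of finitely supported linear combinations of the `e n`,
modelled as finitely supported sequences. -/
abbrev Db : Type := ℕ →₀ ℂ

/-- The inclusion `D → H`. -/
def incl : Db →ₗ[ℂ] Hb := Finsupp.linearCombination ℂ eb

/-- The annihilation operator `a : D → D`, `a e₀ = 0`, `a eₙ = √n e_{n-1}`. -/
def aOp : Db →ₗ[ℂ] Db :=
  Finsupp.lsum ℂ fun n => (Real.sqrt n : ℂ) • Finsupp.lsingle (n - 1)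

/-- The creation operator `a† : D → D`, `a† eₙ = √(n+1) e_{n+1}`. -/
def adOp : Db →ₗ[ℂ] Db :=
  Finsupp.lsum ℂ fun n => (Real.sqrt (n + 1) : ℂ) • Finsupp.lsingle (n + 1)

/-- The number operator `N = a† a` on `D`. -/
def ND : Db →ₗ[ℂ] Db := adOp ∘ₗ aOp

/-- The projection `Π_l` restricted to `D`. -/
def PiD (l : ℕ) : Db →ₗ[ℂ] Db :=
  Finsupp.lsum ℂ fun n => if n = l then Finsupp.lsingle n else 0

/-- `Q_L = Σ_{l=0}^L Π_l` on `D`. -/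
def QD (L : ℕ) : Db →ₗ[ℂ] Db := ∑ l ∈ Finset.range (L + 1), PiD l

/-- The orthogonal projection `Π_l` of `H` onto `ℂ e_l`. -/
def PiH (l : ℕ) : Hb →L[ℂ] Hb := (innerSL ℂ (eb l)).smulRight (eb l)

/-- `Q_L = Σ_{l=0}^L Π_l` on `H`. -/
def QH (L : ℕ) : Hb →L[ℂ] Hb := ∑ l ∈ Finset.range (L + 1), PiH l

/-- For a linear map `T : D → H`, the bounded operator `Π_l T Π_s` on `H`
(it is `x ↦ ⟪e_s, x⟫ • Π_l (T e_s)`, of rank at most one). -/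
def sandwich (T : Db →ₗ[ℂ] Hb) (l s : ℕ) : Hb →L[ℂ] Hb :=
  (innerSL ℂ (eb s)).smulRight (PiH l (T (Finsupp.single s 1)))

/-- Membership in the set `𝒞` of positive, bounded, continuous functions on `[0,∞)`
decreasing faster than any inverse power. -/
structure IsC (f : ℝ → ℝ) : Prop where
  cont : ContinuousOn f (Set.Ici (0 : ℝ))
  bdd : ∃ B : ℝ, ∀ x ∈ Set.Ici (0 : ℝ), f x ≤ B
  pos : ∀ x ∈ Set.Ici (0 : ℝ), 0 < f x
  decay : ∀ n : ℕ, Tendsto (fun x : ℝ => x ^ n * f x) atTop (nhds 0)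

/-- The seminorm `p_{f,k}(T) = Σ_{l,s} f(l) s^k ‖Π_l T Π_s‖ ∈ [0,∞]`. -/
def semin (f : ℝ → ℝ) (k : ℕ) (T : Db →ₗ[ℂ] Hb) : ℝ≥0∞ :=
  ∑' (l : ℕ) (s : ℕ), ENNReal.ofReal (f l * (s : ℝ) ^ k * ‖sandwich T l s‖)

end

noncomputable section Aux

open Finsupp

lemma incl_single (n : ℕ) (c : ℂ) : incl (Finsupp.single n c) = c • eb n := by
  simp [incl, Finsupp.linearCombination_single]

lemma eb_inner (m n : ℕ) : (inner ℂ (eb m) (eb n) : ℂ) = if m = n then 1 else 0 := by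
  rw [eb, eb, lp.inner_single_left]
  rcases eq_or_ne m n with h | h
  · subst h; simp [lp.single_apply_self]
  · simp [lp.single_apply_ne _ _ _ h, h]

lemma orthonormal_eb : Orthonormal ℂ eb := by
  rw [orthonormal_iff_ite]
  intro i j
  simpa using eb_inner i j

lemma aOp_single (n : ℕ) (c : ℂ) :
    aOp (Finsupp.single n c) = (Real.sqrt n : ℂ) • Finsupp.single (n - 1) c := by
  simp [aOp, Finsupp.lsum_single]

lemma adOp_single (n : ℕ) (c : ℂ) :
    adOp (Finsupp.single n c) = (Real.sqrt (n + 1) : ℂ) • Finsupp.single (n + 1) c := by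
  simp [adOp, Finsupp.lsum_single]

lemma ND_single (n : ℕ) (c : ℂ) :
    ND (Finsupp.single n c) = (n : ℂ) • Finsupp.single n c := by
  cases n with
  | zero => simp [ND, aOp_single]
  | succ m =>
      simp only [ND, LinearMap.comp_apply, aOp_single, map_smul, adOp_single,
        Nat.add_sub_cancel, smul_smul]
      congr 1
      push_cast
      rw [← Complex.ofReal_mul, Real.mul_self_sqrt (by positivity)]
      push_cast; ring

lemma M_pow_single (k n : ℕ) (c : ℂ) :
    ((ND + 1) ^ k) (Finsupp.single n c) = ((n : ℂ) + 1) ^ k • Finsupp.single n c := by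
  induction k with
  | zero => simp
  | succ k ih =>
      have h1 : (ND + 1) (Finsupp.single n c) = ((n : ℂ) + 1) • Finsupp.single n c := by
        rw [LinearMap.add_apply, ND_single, Module.End.one_apply, add_smul, one_smul]
      rw [pow_succ, Module.End.mul_apply, h1, map_smul, ih, smul_smul, ← pow_succ']

lemma QD_single (L n : ℕ) (c : ℂ) :
    QD L (Finsupp.single n c) = if n ≤ L then Finsupp.single n c else 0 := by
  rw [QD, LinearMap.sum_apply]
  have h : ∀ l, PiD l (Finsupp.single n c)
      = if n = l then Finsupp.single n c else 0 := by
    intro l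
    rw [PiD, Finsupp.lsum_single]
    split_ifs with h <;> simp [h]
  simp_rw [h]
  rw [Finset.sum_ite_eq]
  simp [Nat.lt_succ_iff]

end Aux
noncomputable section Aux2

/-- The operator `X_L` on `D`. -/
def XD (L : ℕ) : Db →ₗ[ℂ] Db := aOp * QD L + adOp * QD (L - 1)

lemma XD_single (L n : ℕ) (c : ℂ) :
    XD L (Finsupp.single n c)
      = (if n ≤ L then (Real.sqrt n : ℂ) • Finsupp.single (n - 1) c else 0)
        + (if n ≤ L - 1 then (Real.sqrt (n + 1) : ℂ) • Finsupp.single (n + 1) c else 0) := by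
  rw [XD, LinearMap.add_apply, Module.End.mul_apply, Module.End.mul_apply, QD_single, QD_single]
  congr 1
  · split_ifs <;> simp [aOp_single]
  · split_ifs <;> simp [adOp_single]

lemma XD_single_top (L n : ℕ) (c : ℂ) (hn : L < n) : XD L (Finsupp.single n c) = 0 := by
  rw [XD_single]
  rw [if_neg (by omega), if_neg (by omega), add_zero]

/-- rank-one operator `x ↦ c ⟪e m, x⟫ e n`. -/
def rk1 (m n : ℕ) (c : ℝ) : Hb →L[ℂ] Hb := (innerSL ℂ (eb m)).smulRight ((c : ℂ) • eb n)

lemma rk1_apply (m n : ℕ) (c : ℝ) (x : Hb) :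
    rk1 m n c x = (inner ℂ (eb m) x : ℂ) • (c : ℂ) • eb n := rfl

lemma rk1_eb (m n : ℕ) (c : ℝ) (p : ℕ) :
    rk1 m n c (eb p) = if m = p then (c : ℂ) • eb n else 0 := by
  rw [rk1_apply, eb_inner]
  split_ifs <;> simp

/-- weight sequence -/
def gw (f : ℝ → ℝ) (k m : ℕ) : ℝ := f ((m : ℝ) + 1) * ((m : ℝ) + 1) ^ k

/-- the diagonal operator `f(M) M^k Q_L` -/
def TD (f : ℝ → ℝ) (k L : ℕ) : Hb →L[ℂ] Hb :=
  ∑ m ∈ Finset.range (L + 1), rk1 m m (gw f k m)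

def c1r (k n : ℕ) : ℝ := (((n : ℝ) + 1) / (n : ℝ)) ^ k * Real.sqrt n

def c2r (k n : ℕ) : ℝ := (((n : ℝ) + 1) / ((n : ℝ) + 2)) ^ k * Real.sqrt ((n : ℝ) + 1)

/-- the operator `Z = M^{-k} X_L M^k` -/
def ZO (k L : ℕ) : Hb →L[ℂ] Hb :=
  (∑ m ∈ Finset.range L, rk1 (m + 1) m (c1r k (m + 1)))
    + ∑ m ∈ Finset.range L, rk1 m (m + 1) (c2r k m)

lemma TD_eb (f : ℝ → ℝ) (k L p : ℕ) :
    TD f k L (eb p) = if p ≤ L then ((gw f k p : ℝ) : ℂ) • eb p else 0 := by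
  rw [TD, ContinuousLinearMap.sum_apply]
  simp_rw [rk1_eb]
  rw [Finset.sum_ite_eq']
  simp [Nat.lt_succ_iff]

lemma ZO_eb (k L p : ℕ) :
    ZO k L (eb p)
      = (if 1 ≤ p ∧ p ≤ L then ((c1r k p : ℝ) : ℂ) • eb (p - 1) else 0)
        + (if p < L then ((c2r k p : ℝ) : ℂ) • eb (p + 1) else 0) := by
  rw [ZO, ContinuousLinearMap.add_apply, ContinuousLinearMap.sum_apply,
    ContinuousLinearMap.sum_apply]
  congr 1
  · simp_rw [rk1_eb]
    cases p with
    | zero => simp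
    | succ q =>
        have : ∀ m ∈ Finset.range L, (if m + 1 = q + 1 then ((c1r k (m+1) : ℝ) : ℂ) • eb m else 0)
            = if m = q then ((c1r k (m+1) : ℝ) : ℂ) • eb m else 0 := by
          intro m _
          congr 1
          simp
        rw [Finset.sum_congr rfl this, Finset.sum_ite_eq']
        simp [Finset.mem_range, Nat.succ_le_succ_iff, Nat.lt_succ_iff]
  · simp_rw [rk1_eb]
    rw [Finset.sum_ite_eq']
    simp [Finset.mem_range]

end Aux2
noncomputable section Aux3

lemma coeff1 (k q : ℕ) :
    ((c1r k (q + 1) : ℝ) : ℂ) * ((q : ℂ) + 1) ^ k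
      = ((q : ℂ) + 2) ^ k * ((Real.sqrt ((q : ℝ) + 1) : ℝ) : ℂ) := by
  have hn0 : ((q : ℝ) + 1) ≠ 0 := by positivity
  have h : (c1r k (q + 1) : ℝ) * ((q : ℝ) + 1) ^ k
      = ((q : ℝ) + 2) ^ k * Real.sqrt ((q : ℝ) + 1) := by
    rw [c1r, div_pow]
    push_cast
    rw [div_mul_eq_mul_div, div_mul_eq_mul_div,
      div_eq_iff (by positivity : ((q : ℝ) + 1) ^ k ≠ 0)]
    ring
  calc ((c1r k (q + 1) : ℝ) : ℂ) * ((q : ℂ) + 1) ^ k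
      = (((c1r k (q + 1) : ℝ) * ((q : ℝ) + 1) ^ k : ℝ) : ℂ) := by push_cast; ring
    _ = ((q : ℂ) + 2) ^ k * ((Real.sqrt ((q : ℝ) + 1) : ℝ) : ℂ) := by
        rw [h]; push_cast; ring

lemma coeff2 (k n : ℕ) :
    ((c2r k n : ℝ) : ℂ) * ((n : ℂ) + 2) ^ k
      = ((n : ℂ) + 1) ^ k * ((Real.sqrt ((n : ℝ) + 1) : ℝ) : ℂ) := by
  have hn0 : ((n : ℝ) + 2) ≠ 0 := by positivity
  have h : (c2r k n : ℝ) * ((n : ℝ) + 2) ^ k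
      = ((n : ℝ) + 1) ^ k * Real.sqrt ((n : ℝ) + 1) := by
    rw [c2r, div_pow]
    rw [div_mul_eq_mul_div, div_mul_eq_mul_div,
      div_eq_iff (by positivity : ((n : ℝ) + 2) ^ k ≠ 0)]
    try ring
  calc ((c2r k n : ℝ) : ℂ) * ((n : ℂ) + 2) ^ k
      = (((c2r k n : ℝ) * ((n : ℝ) + 2) ^ k : ℝ) : ℂ) := by push_cast; ring
    _ = ((n : ℂ) + 1) ^ k * ((Real.sqrt ((n : ℝ) + 1) : ℝ) : ℂ) := by
        rw [h]; push_cast; ring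

lemma key (f : ℝ → ℝ) (k L : ℕ) (hL : 1 ≤ L) (fM : Hb →L[ℂ] Hb)
    (hfM : ∀ n : ℕ, fM (eb n) = (f ((n : ℝ) + 1) : ℂ) • eb n) :
    ∀ j : ℕ, ∀ n : ℕ, n ≤ L →
      TD f k L ((ZO k L ^ j) (eb n))
        = (((n : ℝ) : ℂ) + 1) ^ k • fM (incl ((XD L ^ j) (Finsupp.single n 1))) := by
  intro j
  induction j with
  | zero =>
      intro n hn
      simp only [pow_zero, ContinuousLinearMap.one_apply, Module.End.one_apply]
      rw [TD_eb, if_pos hn, incl_single, one_smul, hfM, smul_smul, gw]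
      push_cast
      ring_nf
  | succ j ih =>
      intro n hn
      have hZpow : (ZO k L ^ (j + 1)) (eb n) = (ZO k L ^ j) (ZO k L (eb n)) := by
        rw [pow_succ, ContinuousLinearMap.mul_apply]
      have hXpow : (XD L ^ (j + 1)) (Finsupp.single n 1)
          = (XD L ^ j) (XD L (Finsupp.single n 1)) := by
        rw [pow_succ, Module.End.mul_apply]
      rw [hZpow, hXpow]
      cases n with
      | zero =>
          rw [ZO_eb, XD_single]
          rw [if_neg (by omega), if_pos (by omega), zero_add, if_pos (by omega),
            if_pos (by omega)]
          simp only [Nat.cast_zero, Real.sqrt_zero, Complex.ofReal_zero, zero_smul,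
            map_zero, zero_add, map_smul]
          rw [ih 1 hL]
          have h2 := coeff2 k 0
          push_cast at h2 ⊢
          norm_num [Real.sqrt_one] at h2 ⊢
          match_scalars
          try simp only [Complex.coe_algebraMap]
          linear_combination h2
      | succ q =>
          rw [ZO_eb, XD_single]
          rw [if_pos ⟨by omega, hn⟩, if_pos hn]
          by_cases hc : q + 1 < L
          · rw [if_pos hc, if_pos (by omega)]
            simp only [map_add, map_smul, Nat.add_sub_cancel]
            rw [ih q (by omega), ih (q + 1 + 1) (by omega)]
            have h1 := coeff1 k q
            have h2 := coeff2 k (q + 1)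
            push_cast at h1 h2 ⊢
            match_scalars
            · try simp only [Complex.coe_algebraMap]
              linear_combination h1
            · try simp only [Complex.coe_algebraMap]
              linear_combination h2
          · rw [if_neg hc, if_neg (by omega)]
            simp only [add_zero, map_smul, Nat.add_sub_cancel]
            rw [ih q (by omega)]
            have h1 := coeff1 k q
            push_cast at h1 ⊢
            match_scalars
            try simp only [Complex.coe_algebraMap]
            linear_combination h1

end Aux3
noncomputable section Aux4

lemma opnorm_rk1_sum (s : Finset ℕ) (σ τ : ℕ → ℕ) (hσ : Function.Injective σ)
    (hτ : Function.Injective τ) (d : ℕ → ℝ) (r : ℝ) (hr : 0 ≤ r)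
    (hd : ∀ i ∈ s, |d i| ≤ r) :
    ‖∑ i ∈ s, rk1 (σ i) (τ i) (d i)‖ ≤ r := by
  apply ContinuousLinearMap.opNorm_le_bound _ hr
  intro x
  have hx : (∑ i ∈ s, rk1 (σ i) (τ i) (d i)) x
      = ∑ i ∈ s, ((inner ℂ (eb (σ i)) x : ℂ) * (d i : ℂ)) • eb (τ i) := by
    rw [ContinuousLinearMap.sum_apply]
    refine Finset.sum_congr rfl fun i _ => ?_
    rw [rk1_apply, smul_smul]
  have horth : Orthonormal ℂ (fun i => eb (τ i)) := orthonormal_eb.comp τ hτ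
  have hnormsq : ‖(∑ i ∈ s, rk1 (σ i) (τ i) (d i)) x‖ ^ 2
      = ∑ i ∈ s, ‖(inner ℂ (eb (σ i)) x : ℂ) * (d i : ℂ)‖ ^ 2 := by
    rw [hx, ← inner_self_eq_norm_sq (𝕜 := ℂ), horth.inner_sum]
    rw [map_sum]
    refine Finset.sum_congr rfl fun i _ => ?_
    rw [RCLike.conj_mul]
    norm_cast
  have hbound : ∑ i ∈ s, ‖(inner ℂ (eb (σ i)) x : ℂ) * (d i : ℂ)‖ ^ 2
      ≤ r ^ 2 * ‖x‖ ^ 2 := by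
    have h1 : ∑ i ∈ s, ‖(inner ℂ (eb (σ i)) x : ℂ) * (d i : ℂ)‖ ^ 2
        ≤ ∑ i ∈ s, r ^ 2 * ‖(inner ℂ (eb (σ i)) x : ℂ)‖ ^ 2 := by
      refine Finset.sum_le_sum fun i hi => ?_
      rw [norm_mul, mul_pow, mul_comm]
      have : ‖(d i : ℂ)‖ ≤ r := by rw [Complex.norm_real, Real.norm_eq_abs]; exact hd i hi
      gcongr
    refine h1.trans ?_
    rw [← Finset.mul_sum]
    refine mul_le_mul_of_nonneg_left ?_ (by positivity)
    calc ∑ i ∈ s, ‖(inner ℂ (eb (σ i)) x : ℂ)‖ ^ 2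
        = ∑ m ∈ s.image σ, ‖(inner ℂ (eb m) x : ℂ)‖ ^ 2 := by
          rw [Finset.sum_image (fun a _ b _ h => hσ h)]
      _ ≤ ‖x‖ ^ 2 := orthonormal_eb.sum_inner_products_le x
  have := hnormsq ▸ hbound
  have hfin : ‖(∑ i ∈ s, rk1 (σ i) (τ i) (d i)) x‖ ^ 2 ≤ (r * ‖x‖) ^ 2 := by
    rw [mul_pow]; exact this
  exact le_of_pow_le_pow_left₀ two_ne_zero (by positivity) hfin

end Aux4
noncomputable section Aux5

lemma gw_nonneg (f : ℝ → ℝ) (hf : IsC f) (k i : ℕ) : 0 ≤ gw f k i := by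
  have h1 : 0 < f ((i : ℝ) + 1) := hf.pos _ (Set.mem_Ici.mpr (by positivity))
  have h2 : (0 : ℝ) ≤ ((i : ℝ) + 1) ^ k := by positivity
  exact mul_nonneg h1.le h2

lemma summable_gw (f : ℝ → ℝ) (hf : IsC f) (k : ℕ) :
    Summable (fun l : ℕ => f ((l : ℝ) + 1) * ((l : ℝ) + 1) ^ k) := by
  have h1 : Tendsto (fun l : ℕ => ((l : ℝ) + 1)) atTop atTop :=
    tendsto_atTop_add_const_right atTop 1 tendsto_natCast_atTop_atTop
  have hten : Tendsto (fun l : ℕ => ((l : ℝ) + 1) ^ (k + 2) * f ((l : ℝ) + 1))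
      atTop (nhds 0) := (hf.decay (k + 2)).comp h1
  have hev : ∀ᶠ l : ℕ in atTop, ((l : ℝ) + 1) ^ (k + 2) * f ((l : ℝ) + 1) < 1 :=
    Filter.Tendsto.eventually_lt_const (by norm_num) hten
  obtain ⟨N, hN⟩ := Filter.eventually_atTop.mp hev
  rw [← summable_nat_add_iff N]
  have base : Summable (fun l : ℕ => 1 / ((l : ℝ) + 1) ^ 2) := by
    have b0 : Summable (fun n : ℕ => 1 / (n : ℝ) ^ 2) :=
      Real.summable_one_div_nat_pow.mpr (by norm_num)
    have := (summable_nat_add_iff 1).mpr b0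
    simpa using this
  refine Summable.of_nonneg_of_le (fun l => gw_nonneg f hf k (l + N)) (fun l => ?_) base
  set m : ℕ := l + N with hm
  have hA : ((m : ℝ) + 1) ^ (k + 2) * f ((m : ℝ) + 1) < 1 := hN m (by omega)
  have hpos : (0 : ℝ) < ((m : ℝ) + 1) ^ 2 := by positivity
  have key2 : f ((m : ℝ) + 1) * ((m : ℝ) + 1) ^ k ≤ 1 / ((m : ℝ) + 1) ^ 2 := by
    rw [le_div_iff₀ hpos]
    calc f ((m : ℝ) + 1) * ((m : ℝ) + 1) ^ k * ((m : ℝ) + 1) ^ 2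
        = ((m : ℝ) + 1) ^ (k + 2) * f ((m : ℝ) + 1) := by rw [pow_add]; ring
      _ ≤ 1 := hA.le
  refine key2.trans ?_
  have hlm : ((l : ℝ) + 1) ≤ ((m : ℝ) + 1) := by
    have : (l : ℝ) ≤ (m : ℝ) := by exact_mod_cast Nat.le_add_right l N
    linarith
  gcongr

lemma TD_norm (f : ℝ → ℝ) (hf : IsC f) (k L : ℕ)
    (hsum : Summable (fun l : ℕ => f ((l : ℝ) + 1) * ((l : ℝ) + 1) ^ k)) :
    ‖TD f k L‖ ≤ ∑' l : ℕ, f ((l : ℝ) + 1) * ((l : ℝ) + 1) ^ k := by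
  have hck : 0 ≤ ∑' l : ℕ, f ((l : ℝ) + 1) * ((l : ℝ) + 1) ^ k :=
    tsum_nonneg fun i => gw_nonneg f hf k i
  refine opnorm_rk1_sum (Finset.range (L + 1)) id id Function.injective_id
    Function.injective_id (gw f k) _ hck (fun i _ => ?_)
  rw [abs_of_nonneg (gw_nonneg f hf k i)]
  exact Summable.le_tsum hsum i fun m _ => gw_nonneg f hf k m

lemma c1r_le (k n L : ℕ) (h1 : 1 ≤ n) (h2 : n ≤ L) :
    c1r k n ≤ (2 : ℝ) ^ k * Real.sqrt ((L : ℝ) + 1) := by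
  rw [c1r]
  have hn1 : (1 : ℝ) ≤ (n : ℝ) := by exact_mod_cast h1
  have hd : ((n : ℝ) + 1) / (n : ℝ) ≤ 2 := by
    rw [div_le_iff₀ (by linarith)]; linarith
  have hpk : (((n : ℝ) + 1) / (n : ℝ)) ^ k ≤ 2 ^ k :=
    pow_le_pow_left₀ (by positivity) hd k
  have hs : Real.sqrt (n : ℝ) ≤ Real.sqrt ((L : ℝ) + 1) := by
    refine Real.sqrt_le_sqrt ?_
    have : (n : ℝ) ≤ (L : ℝ) := by exact_mod_cast h2
    linarith
  exact mul_le_mul hpk hs (Real.sqrt_nonneg _) (by positivity)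

lemma c2r_le (k n L : ℕ) (h2 : n ≤ L) : c2r k n ≤ Real.sqrt ((L : ℝ) + 1) := by
  rw [c2r]
  have hd : ((n : ℝ) + 1) / ((n : ℝ) + 2) ≤ 1 := by
    rw [div_le_one (by positivity)]; linarith
  have hpk : (((n : ℝ) + 1) / ((n : ℝ) + 2)) ^ k ≤ 1 := pow_le_one₀ (by positivity) hd
  have hs : Real.sqrt ((n : ℝ) + 1) ≤ Real.sqrt ((L : ℝ) + 1) := by
    refine Real.sqrt_le_sqrt ?_
    have : (n : ℝ) ≤ (L : ℝ) := by exact_mod_cast h2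
    linarith
  calc (((n : ℝ) + 1) / ((n : ℝ) + 2)) ^ k * Real.sqrt ((n : ℝ) + 1)
      ≤ 1 * Real.sqrt ((L : ℝ) + 1) := mul_le_mul hpk hs (Real.sqrt_nonneg _) (by norm_num)
    _ = Real.sqrt ((L : ℝ) + 1) := one_mul _

lemma c1r_nonneg (k n : ℕ) : 0 ≤ c1r k n := by rw [c1r]; positivity

lemma c2r_nonneg (k n : ℕ) : 0 ≤ c2r k n := by rw [c2r]; positivity

lemma ZO_norm (k L : ℕ) :
    ‖ZO k L‖ ≤ ((2 : ℝ) ^ k + 1) * Real.sqrt ((L : ℝ) + 1) := by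
  have h1 : ‖∑ m ∈ Finset.range L, rk1 (m + 1) m (c1r k (m + 1))‖
      ≤ (2 : ℝ) ^ k * Real.sqrt ((L : ℝ) + 1) := by
    refine opnorm_rk1_sum (Finset.range L) (fun m => m + 1) id
      (add_left_injective 1) Function.injective_id (fun m => c1r k (m + 1)) _
      (by positivity) (fun i hi => ?_)
    rw [abs_of_nonneg (c1r_nonneg _ _)]
    exact c1r_le k (i + 1) L (by omega) (Finset.mem_range.mp hi)
  have h2 : ‖∑ m ∈ Finset.range L, rk1 m (m + 1) (c2r k m)‖
      ≤ Real.sqrt ((L : ℝ) + 1) := by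
    refine opnorm_rk1_sum (Finset.range L) id (fun m => m + 1)
      Function.injective_id (add_left_injective 1) (c2r k) _
      (Real.sqrt_nonneg _) (fun i hi => ?_)
    rw [abs_of_nonneg (c2r_nonneg _ _)]
    exact c2r_le k i L (by have := Finset.mem_range.mp hi; omega)
  calc ‖ZO k L‖ ≤ _ + _ := norm_add_le _ _
    _ ≤ (2 : ℝ) ^ k * Real.sqrt ((L : ℝ) + 1) + Real.sqrt ((L : ℝ) + 1) :=
        add_le_add h1 h2
    _ = ((2 : ℝ) ^ k + 1) * Real.sqrt ((L : ℝ) + 1) := by ring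

end Aux5

noncomputable section

/-- for `f ∈ 𝒞`, `k ∈ ℕ`, `j ≥ 1` and `L ≥ 1`: the constant
`c_k = Σ_{l=1}^∞ f(l) lᵏ` is finite, the operator `f(M) X_Lʲ Mᵏ` (defined on `D`) extends
to a bounded operator `B` on `H`, and `‖B‖ ≤ c_k ((2ᵏ+1)(L+1)^{3/2})ʲ`.
Here `X_L = a Q_L + a† Q_{L-1}`, `M = N + 1`, and `fM` is the diagonal operator
`f(M) eₙ = f(n+1) eₙ`. -/
theorem stmt17 (f : ℝ → ℝ) (hf : IsC f) (k j L : ℕ) (hj : 1 ≤ j) (hL : 1 ≤ L)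
    (fM : Hb →L[ℂ] Hb)
    (hfM : ∀ n : ℕ, fM (eb n) = (f ((n : ℝ) + 1) : ℂ) • eb n) :
    Summable (fun l : ℕ => f ((l : ℝ) + 1) * ((l : ℝ) + 1) ^ k) ∧
    ∃ B : Hb →L[ℂ] Hb,
      (∀ x : Db,
        B (incl x)
          = fM (incl (((aOp * QD L + adOp * QD (L - 1)) ^ j) (((ND + 1) ^ k) x)))) ∧
      ‖B‖ ≤ (∑' l : ℕ, f ((l : ℝ) + 1) * ((l : ℝ) + 1) ^ k) *
              ((2 ^ k + 1) * ((L : ℝ) + 1) ^ ((3 : ℝ) / 2)) ^ j := by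
  have hsum := summable_gw f hf k
  refine ⟨hsum, (TD f k L).comp ((ZO k L) ^ j), ?_, ?_⟩
  · -- agreement on D
    have hXD : aOp * QD L + adOp * QD (L - 1) = XD L := rfl
    rw [hXD]
    have hbasis : ∀ n : ℕ, (TD f k L).comp ((ZO k L) ^ j) (incl (Finsupp.single n 1))
        = fM (incl ((XD L ^ j) (((ND + 1) ^ k) (Finsupp.single n 1)))) := by
      intro n
      rw [incl_single, one_smul, ContinuousLinearMap.comp_apply, M_pow_single,
        map_smul (XD L ^ j), map_smul incl, map_smul fM]
      by_cases hn : n ≤ L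
      · rw [key f k L hL fM hfM j n hn]
        rw [Complex.ofReal_natCast]
      · obtain ⟨j', rfl⟩ : ∃ j', j = j' + 1 := ⟨j - 1, by omega⟩
        have hZ0 : ZO k L (eb n) = 0 := by
          rw [ZO_eb, if_neg (by omega), if_neg (by omega), add_zero]
        have hX0 : XD L (Finsupp.single n (1 : ℂ)) = 0 :=
          XD_single_top L n 1 (by omega)
        rw [pow_succ, ContinuousLinearMap.mul_apply, hZ0, map_zero, map_zero,
          pow_succ, Module.End.mul_apply, hX0, map_zero, map_zero, map_zero,
          smul_zero]
    intro x
    induction x using Finsupp.induction_linear with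
    | zero => simp
    | add a b ha hb => simp only [map_add, ha, hb]
    | single n c =>
        have hx : (Finsupp.single n c : Db) = c • Finsupp.single n (1 : ℂ) := by
          rw [Finsupp.smul_single', mul_one]
        rw [hx, map_smul incl, map_smul ((TD f k L).comp ((ZO k L) ^ j)),
          map_smul ((ND + 1) ^ k : Db →ₗ[ℂ] Db), map_smul (XD L ^ j),
          map_smul incl, map_smul fM, hbasis n]
  · -- norm bound
    set ck := ∑' l : ℕ, f ((l : ℝ) + 1) * ((l : ℝ) + 1) ^ k with hck
    have hck0 : 0 ≤ ck := tsum_nonneg fun i => gw_nonneg f hf k i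
    have hTD := TD_norm f hf k L hsum
    have hZO := ZO_norm k L
    have hsqrt : Real.sqrt ((L : ℝ) + 1) ≤ ((L : ℝ) + 1) ^ ((3 : ℝ) / 2) := by
      rw [Real.sqrt_eq_rpow]
      refine Real.rpow_le_rpow_of_exponent_le ?_ (by norm_num)
      have : (0 : ℝ) ≤ (L : ℝ) := Nat.cast_nonneg L
      linarith
    calc ‖(TD f k L).comp ((ZO k L) ^ j)‖
        ≤ ‖TD f k L‖ * ‖(ZO k L) ^ j‖ := ContinuousLinearMap.opNorm_comp_le _ _
      _ ≤ ‖TD f k L‖ * ‖ZO k L‖ ^ j :=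
          mul_le_mul_of_nonneg_left (norm_pow_le' _ (by omega)) (norm_nonneg _)
      _ ≤ ck * (((2 : ℝ) ^ k + 1) * Real.sqrt ((L : ℝ) + 1)) ^ j := by
          refine mul_le_mul hTD (pow_le_pow_left₀ (norm_nonneg _) hZO j) (by positivity) hck0
      _ ≤ ck * (((2 : ℝ) ^ k + 1) * ((L : ℝ) + 1) ^ ((3 : ℝ) / 2)) ^ j := by
          refine mul_le_mul_of_nonneg_left ?_ hck0
          refine pow_le_pow_left₀ (by positivity) ?_ j
          exact mul_le_mul_of_nonneg_left hsqrt (by positivity)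


end
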